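/- If a finite game graph G with n players and |V| positions yields recurring hierarchical information, then every gap of every play of G has length at most |V|·2^{2n²|V|²}; in particular the gap size of G is bounded by 2^{O(n²|V|²)}. -/

import Mathlib

/-- A finite game graph for `n` players: positions `V` with initial position `init`,
action sets `A i`, observation sets `B i`, a move relation labelled by action
profiles (with no dead ends), and observation functions. -/
structure GameGraph (n : ℕ) (V : Type) (A : Fin n → Type) (B : Fin n → Type) where
  init : V
  move : V → (∀ i, A i) → V → Prop
  noDeadEnd : ∀ v a, ∃ w, move v a w
  obs : ∀ i : Fin n, V → B i

/-- A Moore machine with finite state set `Q`, input alphabet `σ`, output alphabet `γ`. -/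
structure Moore (σ γ : Type) where
  Q : Type
  finQ : Fintype Q
  q0 : Q
  δ : Q → σ → Q
  out : Q → γ

namespace Moore

/-- The output letter of a Moore machine after reading a word. -/
def output {σ γ : Type} (mc : Moore σ γ) (w : List σ) : γ :=
  mc.out (w.foldl mc.δ mc.q0)

/-- The output word of a Moore machine along a word: the `k`-th letter is the
output after reading the prefix of length `k+1`. -/
def outWord {σ γ : Type} (mc : Moore σ γ) (w : List σ) : List γ :=
  ((w.scanl mc.δ mc.q0).drop 1).map mc.out

end Moore

/-- A deterministic parity automaton over alphabet `α`. -/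
structure ParityAut (α : Type) where
  Q : Type
  finQ : Fintype Q
  q0 : Q
  δ : Q → α → Q
  prio : Q → ℕ

namespace ParityAut

/-- The run of a deterministic parity automaton on an infinite word. -/
def run {α : Type} (d : ParityAut α) (f : ℕ → α) : ℕ → d.Q
  | 0 => d.q0
  | t + 1 => d.δ (run d f t) (f t)

/-- Parity acceptance: the least priority occurring infinitely often is even. -/
def Accepts {α : Type} (d : ParityAut α) (f : ℕ → α) : Prop :=
  Even (sInf { p | ∃ᶠ t in Filter.atTop, d.prio (d.run f t) = p })

end ParityAut

/-- A deterministic Büchi automaton over alphabet `α` with state set `σ`. -/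
structure DetBuchi (α σ : Type) where
  q0 : σ
  δ : σ → α → σ
  accept : Set σ

namespace DetBuchi

/-- The run of a deterministic Büchi automaton on an infinite word. -/
def run {α σ : Type} (d : DetBuchi α σ) (f : ℕ → α) : ℕ → σ
  | 0 => d.q0
  | t + 1 => d.δ (run d f t) (f t)

/-- Büchi acceptance: the run visits accepting states infinitely often. -/
def Accepts {α σ : Type} (d : DetBuchi α σ) (f : ℕ → α) : Prop :=
  ∃ᶠ t in Filter.atTop, d.run f t ∈ d.accept

end DetBuchi

namespace GameGraph

variable {n : ℕ} {V : Type} {A B : Fin n → Type}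

/-- Two positions are linked by a move (for some action profile). -/
def step (G : GameGraph n V A B) (u w : V) : Prop := ∃ a, G.move u a w

/-- A history: a nonempty sequence starting at the initial position, each
consecutive pair lying on a move. -/
def IsHistory (G : GameGraph n V A B) (π : List V) : Prop :=
  π.head? = some G.init ∧ π.Chain' G.step

/-- The observation sequence of player `i` along a history (the observation at
the initial position is discarded). -/
def obsSeq (G : GameGraph n V A B) (i : Fin n) (π : List V) : List (B i) :=
  (π.drop 1).map (G.obs i)

/-- Histories are indistinguishable for player `i` if they yield the same observations. -/
def Indist (G : GameGraph n V A B) (i : Fin n) (π π' : List V) : Prop :=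
  G.obsSeq i π = G.obsSeq i π'

/-- The information set of player `i` at history `π`. -/
def InfoSet (G : GameGraph n V A B) (i : Fin n) (π : List V) : Set (List V) :=
  { π' | G.IsHistory π' ∧ G.Indist i π π' }

/-- A history yields hierarchical information if the information sets of players
are totally ordered by inclusion. -/
def HistHI (G : GameGraph n V A B) (π : List V) : Prop :=
  ∀ i j : Fin n, G.InfoSet i π ⊆ G.InfoSet j π ∨ G.InfoSet j π ⊆ G.InfoSet i π

/-- Static hierarchical information: there is a total order of the players such
that along every history, the information sets respect this order. -/
def StaticHI (G : GameGraph n V A B) : Prop :=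
  ∃ ord : Fin n → Fin n → Prop, IsLinearOrder (Fin n) ord ∧
    ∀ i j : Fin n, ord i j → ∀ π, G.IsHistory π → G.InfoSet i π ⊆ G.InfoSet j π

/-- Hierarchical observation: there is a total order of the players such that
the observation of a smaller player determines that of a bigger player, positionally. -/
def HierObs (G : GameGraph n V A B) : Prop :=
  ∃ ord : Fin n → Fin n → Prop, IsLinearOrder (Fin n) ord ∧
    ∀ i j : Fin n, ord i j → ∀ v v' : V, G.obs i v = G.obs i v' → G.obs j v = G.obs j v'

/-- Dynamic hierarchical information: every history yields hierarchical information. -/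
def DynamicHI (G : GameGraph n V A B) : Prop := ∀ π, G.IsHistory π → G.HistHI π

/-- The prefix `v₀ … v_t` of a play, as a list. -/
def playPrefix (f : ℕ → V) (t : ℕ) : List V := (List.range (t + 1)).map f

/-- A play: an infinite sequence all of whose prefixes are histories. -/
def IsPlay (G : GameGraph n V A B) (f : ℕ → V) : Prop :=
  ∀ t, G.IsHistory (playPrefix f t)

/-- A play yields recurring hierarchical information if infinitely many of its
prefix histories yield hierarchical information. -/
def PlayRecurringHI (G : GameGraph n V A B) (f : ℕ → V) : Prop :=
  ∀ T, ∃ t, T ≤ t ∧ G.HistHI (playPrefix f t)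

/-- A game yields recurring hierarchical information if every play does. -/
def RecurringHI (G : GameGraph n V A B) : Prop :=
  ∀ f, G.IsPlay f → G.PlayRecurringHI f

/-- `[t, t+ℓ]` is a gap of the play `f`: no prefix of length `r ∈ [t, t+ℓ]` yields
hierarchical information.  The length of this gap is `ℓ + 1`. -/
def IsGap (G : GameGraph n V A B) (f : ℕ → V) (t ℓ : ℕ) : Prop :=
  ∀ r, t ≤ r → r ≤ t + ℓ → ¬ G.HistHI (playPrefix f r)

/-- Information-consistency of a strategy profile: each component is constant on
indistinguishability classes of histories. -/
def Consistent (G : GameGraph n V A B) (s : ∀ i, List V → A i) : Prop :=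
  ∀ (i : Fin n) (π π' : List V),
    G.IsHistory π → G.IsHistory π' → G.Indist i π π' → s i π = s i π'

/-- A play follows a strategy profile. -/
def Follows (G : GameGraph n V A B) (s : ∀ i, List V → A i) (f : ℕ → V) : Prop :=
  f 0 = G.init ∧ ∀ t, ∃ a, G.move (f t) a (f (t + 1)) ∧ ∀ i, a i = s i (playPrefix f t)

/-- A distributed winning strategy for winning condition `W`: an information-consistent
profile all of whose outcomes lie in `W`. -/
def WinningProfile (G : GameGraph n V A B) (W : Set (ℕ → V)) (s : ∀ i, List V → A i) : Prop :=
  G.Consistent s ∧ ∀ f, G.Follows s f → f ∈ W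

/-- A finite-state strategy for player `i`: implemented by a Moore machine reading
the observation sequence of the history. -/
def FinStateStrategy (G : GameGraph n V A B) (i : Fin n) (si : List V → A i) : Prop :=
  ∃ mc : Moore (B i) (A i), ∀ π, G.IsHistory π → si π = mc.output (G.obsSeq i π)

/-- The game admits a distributed winning strategy for `W`. -/
def HasDWS (G : GameGraph n V A B) (W : Set (ℕ → V)) : Prop :=
  ∃ s : ∀ i, List V → A i, G.WinningProfile W s

/-- The game admits a finite-state distributed winning strategy for `W`. -/
def HasFinDWS (G : GameGraph n V A B) (W : Set (ℕ → V)) : Prop :=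
  ∃ s : ∀ i, List V → A i, G.WinningProfile W s ∧ ∀ i, G.FinStateStrategy i (s i)

/-- `i ⪯_π j` : at history `π`, player `i` is at least as informed as player `j`. -/
def infoLE (G : GameGraph n V A B) (π : List V) (i j : Fin n) : Prop :=
  G.InfoSet i π ⊆ G.InfoSet j π

/-- The information rank of player `i` at history `π`: the number of players `j`
with `j ≺_π i`, or with `j < i` and `j ≈_π i`. -/
noncomputable def rank (G : GameGraph n V A B) (i : Fin n) (π : List V) : ℕ :=
  Nat.card {j : Fin n //
    (G.infoLE π j i ∧ ¬ G.infoLE π i j) ∨ (j < i ∧ G.infoLE π j i ∧ G.infoLE π i j)}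

/-- The signal `λ_j^i`: the set of observations of player `i` at the last positions of
histories in the information set of player `j`. -/
def lam (G : GameGraph n V A B) (i j : Fin n) (π : List V) : Set (B i) :=
  { b | ∃ π', π' ∈ G.InfoSet j π ∧ ∃ v, π'.getLast? = some v ∧ G.obs i v = b }

/-- Players `i` and `j` cross at stage `ℓ` of the play `f`. -/
def Crossing (G : GameGraph n V A B) (f : ℕ → V) (ℓ : ℕ) (i j : Fin n) : Prop :=
  G.InfoSet i (playPrefix f ℓ) ⊂ G.InfoSet j (playPrefix f ℓ) ∧
  G.InfoSet j (playPrefix f (ℓ + 1)) ⊂ G.InfoSet i (playPrefix f (ℓ + 1))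

/-- A game is cross-free if no two players cross at any stage of any play. -/
def CrossFree (G : GameGraph n V A B) : Prop :=
  ∀ f, G.IsPlay f → ∀ (ℓ : ℕ) (i j : Fin n), ¬ G.Crossing f ℓ i j

end GameGraph

/-!
Along a play, the *knowledge state* at round `t` consists of the current position together
with, for every pair of players `(i, j)`, the set of pairs `(v, b)` where `v` ends a history
that player `i` cannot distinguish from the current one and `b` records whether player `j`
cannot distinguish it either. Hierarchical information at round `t` is determined by this
state, and the state at round `t + 1` is a function of the state at round `t` and the new
position. There are at most `|V| · 2^(2n²|V|²)` knowledge states, so a longer gap contains two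
rounds `r₁ < r₂` with the same state. Repeating the segment between them forever produces a
play whose knowledge states after round `r₁` all occur in the gap, so it yields hierarchical
information only finitely often, contradicting recurring hierarchical information.
-/

lemma exists_lt_map_eq_of_card_lt {α : Type*} [Fintype α] (g : ℕ → α) (t ℓ : ℕ)
    (h : Fintype.card α < ℓ + 1) : ∃ a b, t ≤ a ∧ a < b ∧ b ≤ t + ℓ ∧ g a = g b := by
  obtain ⟨a, ha, b, hb, hne, heq⟩ := Finset.exists_ne_map_eq_of_card_lt_of_maps_to
    (s := Finset.Icc t (t + ℓ)) (t := Finset.univ) (f := g)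
    (by rw [Finset.card_univ, Nat.card_Icc]; omega) (fun _ _ => Finset.mem_univ _)
  rw [Finset.mem_Icc] at ha hb
  rcases hne.lt_or_gt with hab | hab
  · exact ⟨a, b, ha.1, hab, hb.2, heq⟩
  · exact ⟨b, a, hb.1, hab, ha.2, heq.symm⟩

/-- Runs through `0, 1, …, r₂ - 1` and then repeats the block `r₁, …, r₂ - 1` forever. -/
def loopIndex (r₁ r₂ : ℕ) : ℕ → ℕ
  | 0 => 0
  | s + 1 => if loopIndex r₁ r₂ s + 1 = r₂ then r₁ else loopIndex r₁ r₂ s + 1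

lemma loopIndex_succ (r₁ r₂ s : ℕ) :
    loopIndex r₁ r₂ (s + 1) = loopIndex r₁ r₂ s + 1 ∧ loopIndex r₁ r₂ s + 1 ≠ r₂ ∨
      loopIndex r₁ r₂ (s + 1) = r₁ ∧ loopIndex r₁ r₂ s + 1 = r₂ := by
  rw [loopIndex]
  split_ifs with h
  · exact Or.inr ⟨rfl, h⟩
  · exact Or.inl ⟨rfl, h⟩

lemma loopIndex_lt {r₁ r₂ : ℕ} (h : r₁ < r₂) (s : ℕ) : loopIndex r₁ r₂ s < r₂ := by
  induction s with
  | zero => exact Nat.zero_lt_of_lt h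
  | succ s ih => rcases loopIndex_succ r₁ r₂ s with h' | h' <;> omega

lemma min_le_loopIndex (r₁ r₂ s : ℕ) : min s r₁ ≤ loopIndex r₁ r₂ s := by
  induction s with
  | zero => simp [loopIndex]
  | succ s ih => rcases loopIndex_succ r₁ r₂ s with h | h <;> omega

namespace GameGraph

variable {n : ℕ} {V : Type} {A B : Fin n → Type} {G : GameGraph n V A B}

section Histories

lemma IsHistory.ne_nil {π : List V} (h : G.IsHistory π) : π ≠ [] := by
  rintro rfl
  simp [IsHistory] at h

lemma isHistory_append_singleton_iff {π : List V} (h : π ≠ []) (w : V) :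
    G.IsHistory (π ++ [w]) ↔ G.IsHistory π ∧ ∀ u ∈ π.getLast?, G.step u w := by
  change (π ++ [w]).head? = _ ∧ (π ++ [w]).IsChain G.step ↔
    (π.head? = _ ∧ π.IsChain G.step) ∧ _
  simp only [List.head?_append_of_ne_nil _ h, List.isChain_append, List.isChain_singleton,
    List.head?_cons, Option.mem_some_iff, forall_eq', true_and, and_assoc]

lemma obsSeq_append_singleton (i : Fin n) {π : List V} (h : π ≠ []) (v : V) :
    G.obsSeq i (π ++ [v]) = G.obsSeq i π ++ [G.obs i v] := by
  rw [obsSeq, List.drop_append_of_le_length (List.length_pos_iff.mpr h), List.map_append]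
  rfl

lemma indist_append_singleton_iff (i : Fin n) {π π' : List V} (h : π ≠ []) (h' : π' ≠ [])
    (v w : V) :
    G.Indist i (π ++ [v]) (π' ++ [w]) ↔ G.Indist i π π' ∧ G.obs i v = G.obs i w := by
  rw [Indist, Indist, obsSeq_append_singleton i h, obsSeq_append_singleton i h',
    ← List.concat_eq_append, ← List.concat_eq_append, List.concat_inj]

end Histories

section Knowledge

def knowledge (G : GameGraph n V A B) (i j : Fin n) (π : List V) : Set (V × Bool) :=
  { p | ∃ π', G.IsHistory π' ∧ G.Indist i π π' ∧ π'.getLast? = some p.1 ∧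
      (p.2 = true ↔ G.Indist j π π') }

lemma infoSet_subset_iff_forall_knowledge (i j : Fin n) (π : List V) :
    G.InfoSet i π ⊆ G.InfoSet j π ↔ ∀ p ∈ G.knowledge i j π, p.2 = true := by
  classical
  constructor
  · rintro h p ⟨π', hπ', hi, -, hb⟩
    exact hb.mpr (h ⟨hπ', hi⟩).2
  · rintro h π' ⟨hπ', hi⟩
    refine ⟨hπ', ?_⟩
    have hmem : (π'.getLast hπ'.ne_nil, decide (G.Indist j π π')) ∈ G.knowledge i j π :=
      ⟨π', hπ', hi, List.getLast?_eq_some_getLast hπ'.ne_nil, decide_eq_true_iff⟩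
    exact decide_eq_true_iff.mp (h _ hmem)

lemma histHI_congr_knowledge {π π' : List V}
    (h : ∀ i j, G.knowledge i j π = G.knowledge i j π') :
    G.HistHI π ↔ G.HistHI π' := by
  simp only [HistHI, infoSet_subset_iff_forall_knowledge, h]

def knowledgeStep (G : GameGraph n V A B) (i j : Fin n) (K : Set (V × Bool)) (v : V) :
    Set (V × Bool) :=
  { p | ∃ q ∈ K, G.step q.1 p.1 ∧ G.obs i v = G.obs i p.1 ∧
      (p.2 = true ↔ q.2 = true ∧ G.obs j v = G.obs j p.1) }

lemma knowledge_append_singleton (i j : Fin n) {π : List V} (hπ : π ≠ []) (v : V) :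
    G.knowledge i j (π ++ [v]) = G.knowledgeStep i j (G.knowledge i j π) v := by
  classical
  ext ⟨w, b⟩
  constructor
  · rintro ⟨ρ, hρ, hi, hlast, hb⟩
    obtain rfl | ⟨π', w', rfl⟩ := ρ.eq_nil_or_concat
    · exact absurd rfl hρ.ne_nil
    rw [List.concat_eq_append] at hρ hi hlast hb
    obtain rfl : w' = w := by simpa using hlast
    have hπ' : π' ≠ [] := by
      rintro rfl
      rw [Indist, obsSeq_append_singleton i hπ] at hi
      simp [obsSeq] at hi
    obtain ⟨hπ'hist, hstep⟩ := (isHistory_append_singleton_iff hπ' w').mp hρ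
    rw [indist_append_singleton_iff i hπ hπ'] at hi
    rw [indist_append_singleton_iff j hπ hπ'] at hb
    have hu := List.getLast?_eq_some_getLast hπ'
    refine ⟨(π'.getLast hπ', decide (G.Indist j π π')),
      ⟨π', hπ'hist, hi.1, hu, decide_eq_true_iff⟩, hstep _ hu, hi.2, ?_⟩
    simpa using hb
  · rintro ⟨⟨u, c⟩, ⟨π', hπ', hi, hu, hc⟩, hstep, hobs, hb⟩
    have hne := hπ'.ne_nil
    refine ⟨π' ++ [w], (isHistory_append_singleton_iff hne w).mpr ⟨hπ', by simpa [hu]⟩,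
      (indist_append_singleton_iff i hπ hne v w).mpr ⟨hi, hobs⟩, by simp, ?_⟩
    rw [hb, hc, indist_append_singleton_iff j hπ hne]

end Knowledge

section Plays

lemma playPrefix_succ (f : ℕ → V) (t : ℕ) :
    playPrefix f (t + 1) = playPrefix f t ++ [f (t + 1)] := by
  rw [playPrefix, List.range_succ, List.map_append]
  rfl

lemma playPrefix_ne_nil (f : ℕ → V) (t : ℕ) : playPrefix f t ≠ [] := by
  simp [playPrefix]

lemma isHistory_playPrefix_iff {f : ℕ → V} {t : ℕ} :
    G.IsHistory (playPrefix f t) ↔ f 0 = G.init ∧ ∀ s < t, G.step (f s) (f (s + 1)) := by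
  change (playPrefix f t).head? = _ ∧ (playPrefix f t).IsChain G.step ↔ _
  rw [playPrefix, List.isChain_map, List.isChain_range_succ, List.head?_map, List.head?_range]
  simp

lemma isPlay_iff {f : ℕ → V} : G.IsPlay f ↔ f 0 = G.init ∧ ∀ t, G.step (f t) (f (t + 1)) := by
  simp only [IsPlay, isHistory_playPrefix_iff]
  exact ⟨fun h => ⟨(h 0).1, fun t => (h (t + 1)).2 t t.lt_succ_self⟩,
    fun h t => ⟨h.1, fun s _ => h.2 s⟩⟩

lemma IsPlay.comp {f : ℕ → V} (hf : G.IsPlay f) {c : ℕ → ℕ} (h0 : c 0 = 0)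
    (hc : ∀ s, f (c (s + 1)) = f (c s + 1)) : G.IsPlay (f ∘ c) := by
  rw [isPlay_iff] at hf ⊢
  refine ⟨by simpa [h0] using hf.1, fun s => ?_⟩
  simpa [hc] using hf.2 (c s)

end Plays

section KnowledgeState

abbrev KnowledgeState (n : ℕ) (V : Type) := V × (Fin n → Fin n → Set (V × Bool))

lemma card_knowledgeState_le [Fintype V] :
    Fintype.card (KnowledgeState n V) ≤
      Fintype.card V * 2 ^ (2 * n ^ 2 * Fintype.card V ^ 2) := by
  simp only [Fintype.card_prod, Fintype.card_fun, Fintype.card_set, Fintype.card_bool,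
    Fintype.card_fin, ← pow_mul]
  refine Nat.mul_le_mul_left _ (Nat.pow_le_pow_right two_pos ?_)
  calc Fintype.card V * 2 * n * n = 2 * n ^ 2 * Fintype.card V := by ring
    _ ≤ 2 * n ^ 2 * Fintype.card V ^ 2 := Nat.mul_le_mul_left _ (Nat.le_self_pow two_ne_zero _)

def knowledgeState (G : GameGraph n V A B) (f : ℕ → V) (t : ℕ) : KnowledgeState n V :=
  (f t, fun i j => G.knowledge i j (playPrefix f t))

def nextKnowledgeState (G : GameGraph n V A B) (K : KnowledgeState n V) (v : V) :
    KnowledgeState n V :=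
  (v, fun i j => G.knowledgeStep i j (K.2 i j) v)

lemma knowledgeState_succ (f : ℕ → V) (t : ℕ) :
    G.knowledgeState f (t + 1) = G.nextKnowledgeState (G.knowledgeState f t) (f (t + 1)) := by
  simp only [knowledgeState, nextKnowledgeState, playPrefix_succ,
    knowledge_append_singleton _ _ (playPrefix_ne_nil f t)]

lemma histHI_congr_knowledgeState {f g : ℕ → V} {a b : ℕ}
    (h : G.knowledgeState f a = G.knowledgeState g b) :
    G.HistHI (playPrefix f a) ↔ G.HistHI (playPrefix g b) :=
  histHI_congr_knowledge fun i j => congrFun (congrFun (congrArg Prod.snd h) i) j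

lemma knowledgeState_comp {f : ℕ → V} {c : ℕ → ℕ} (h0 : c 0 = 0)
    (hc : ∀ s, G.knowledgeState f (c (s + 1)) = G.knowledgeState f (c s + 1)) (s : ℕ) :
    G.knowledgeState (f ∘ c) s = G.knowledgeState f (c s) := by
  induction s with
  | zero => simp [knowledgeState, playPrefix, h0]
  | succ s ih =>
    have hpos : f (c (s + 1)) = f (c s + 1) := congrArg Prod.fst (hc s)
    rw [knowledgeState_succ, ih, hc, knowledgeState_succ, Function.comp_apply, hpos]

theorem RecurringHI.knowledgeState_ne (hG : G.RecurringHI) {f : ℕ → V} (hf : G.IsPlay f)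
    {r₁ r₂ : ℕ} (hr : r₁ < r₂) (hgap : ∀ r, r₁ ≤ r → r < r₂ → ¬ G.HistHI (playPrefix f r)) :
    G.knowledgeState f r₁ ≠ G.knowledgeState f r₂ := by
  intro hrep
  have hc : ∀ s, G.knowledgeState f (loopIndex r₁ r₂ (s + 1)) =
      G.knowledgeState f (loopIndex r₁ r₂ s + 1) := by
    intro s
    rcases loopIndex_succ r₁ r₂ s with ⟨h, -⟩ | ⟨hback, hwrap⟩
    · rw [h]
    · rw [hback, hwrap, hrep]
  have hloop : G.IsPlay (f ∘ loopIndex r₁ r₂) := hf.comp rfl fun s => congrArg Prod.fst (hc s)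
  obtain ⟨s, hs, hHI⟩ := hG _ hloop r₁
  rw [histHI_congr_knowledgeState (knowledgeState_comp rfl hc s)] at hHI
  have hmin := min_le_loopIndex r₁ r₂ s
  exact hgap (loopIndex r₁ r₂ s) (by omega) (loopIndex_lt hr s) hHI

end KnowledgeState

end GameGraph

theorem statement13_general {n : ℕ} {V : Type} {A B : Fin n → Type}
    [Fintype V]
    (G : GameGraph n V A B) (hG : G.RecurringHI) :
    ∀ f, G.IsPlay f → ∀ t ℓ, G.IsGap f t ℓ →
      ℓ + 1 ≤ Fintype.card V * 2 ^ (2 * n ^ 2 * Fintype.card V ^ 2) := by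
  intro f hf t ℓ hgap
  by_contra! hlong
  obtain ⟨r₁, r₂, ht, hr, hr₂, hrep⟩ := exists_lt_map_eq_of_card_lt (G.knowledgeState f) t ℓ
    (GameGraph.card_knowledgeState_le.trans_lt hlong)
  exact hG.knowledgeState_ne hf hr (fun r h₁ h₂ => hgap r (by omega) (by omega)) hrep

/-- If a finite game graph with `n` players and `|V|` positions yields
recurring hierarchical information, then every gap of every play has length at most
`|V| · 2^(2n²|V|²)`. -/
theorem statement13 {n : ℕ} {V : Type} {A B : Fin n → Type}
    [Fintype V] [∀ i, Fintype (A i)] [∀ i, Fintype (B i)]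
    (G : GameGraph n V A B) (hG : G.RecurringHI) :
    ∀ f, G.IsPlay f → ∀ t ℓ, G.IsGap f t ℓ →
      ℓ + 1 ≤ Fintype.card V * 2 ^ (2 * n ^ 2 * Fintype.card V ^ 2) :=
  statement13_general G hG
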